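/- If y_n and y_m satisfy -y''+q y = λ y on (0,1) with eigenvalues λ_n ≠ conj(λ_m), both satisfy the boundary condition y(0)cos β = y'(0) sin β, and both satisfy (aλ+b)y(1) = (cλ+d)y'(1) with cλ_n+d ≠ 0 and c·conj(λ_m)+d ≠ 0, then ∫₀¹ y_n conj(y_m) dx = -(ad-bc)·y_n(1)·conj(y_m(1)) / ((cλ_n+d)(c·conj(λ_m)+d)). -/

import Mathlib

open MeasureTheory Set

/-- Lemma 2.1(a): inner product of two eigenfunctions of the Sturm–Liouville problem
with eigenparameter-dependent boundary condition, when `cλn+d ≠ 0 ≠ c conj(λm)+d`. -/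
theorem eigenfunction_inner_product
    (a b c d β : ℝ) (habcd : a * d - b * c < 0) (hac : a * c ≠ 0)
    (hβ0 : 0 ≤ β) (hβπ : β < Real.pi)
    (q : ℝ → ℝ) (hq : ContinuousOn q (Icc (0:ℝ) 1))
    (lamn lamm : ℂ) (hlam : lamn ≠ (starRingEnd ℂ) lamm)
    (hcn : c * lamn + d ≠ 0) (hcm : c * (starRingEnd ℂ) lamm + d ≠ 0)
    (yn yn' yn'' ym ym' ym'' : ℝ → ℂ)
    (hyn : ∀ x ∈ Icc (0:ℝ) 1, HasDerivAt yn (yn' x) x)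
    (hyn' : ∀ x ∈ Icc (0:ℝ) 1, HasDerivAt yn' (yn'' x) x)
    (hyn'' : ContinuousOn yn'' (Icc (0:ℝ) 1))
    (hym : ∀ x ∈ Icc (0:ℝ) 1, HasDerivAt ym (ym' x) x)
    (hym' : ∀ x ∈ Icc (0:ℝ) 1, HasDerivAt ym' (ym'' x) x)
    (hym'' : ContinuousOn ym'' (Icc (0:ℝ) 1))
    (hoden : ∀ x ∈ Icc (0:ℝ) 1, -yn'' x + (q x : ℂ) * yn x = lamn * yn x)
    (hodem : ∀ x ∈ Icc (0:ℝ) 1, -ym'' x + (q x : ℂ) * ym x = lamm * ym x)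
    (hbc0n : yn 0 * (Real.cos β : ℂ) = yn' 0 * (Real.sin β : ℂ))
    (hbc0m : ym 0 * (Real.cos β : ℂ) = ym' 0 * (Real.sin β : ℂ))
    (hbc1n : (a * lamn + b) * yn 1 = (c * lamn + d) * yn' 1)
    (hbc1m : (a * lamm + b) * ym 1 = (c * lamm + d) * ym' 1) :
    ∫ x in (0:ℝ)..1, yn x * (starRingEnd ℂ) (ym x)
      = -((a * d - b * c : ℝ) : ℂ) * (yn 1 * (starRingEnd ℂ) (ym 1))
          / ((c * lamn + d) * (c * (starRingEnd ℂ) lamm + d)) := by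
  set μ : ℂ := (starRingEnd ℂ) lamm with hμ
  set W : ℝ → ℂ := fun x => yn' x * (starRingEnd ℂ) (ym x) - yn x * (starRingEnd ℂ) (ym' x)
    with hWdef
  have huIcc : uIcc (0:ℝ) 1 = Icc 0 1 := uIcc_of_le zero_le_one
  -- continuity
  have cyn : ContinuousOn yn (Icc (0:ℝ) 1) := fun x hx => (hyn x hx).continuousAt.continuousWithinAt
  have cym : ContinuousOn ym (Icc (0:ℝ) 1) := fun x hx => (hym x hx).continuousAt.continuousWithinAt
  have ccym : ContinuousOn (fun x => (starRingEnd ℂ) (ym x)) (Icc (0:ℝ) 1) :=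
    Complex.continuous_conj.comp_continuousOn cym
  have ccym'' : ContinuousOn (fun x => (starRingEnd ℂ) (ym'' x)) (Icc (0:ℝ) 1) :=
    Complex.continuous_conj.comp_continuousOn hym''
  -- derivative of W
  have hW : ∀ x ∈ Icc (0:ℝ) 1,
      HasDerivAt W (yn'' x * (starRingEnd ℂ) (ym x) - yn x * (starRingEnd ℂ) (ym'' x)) x := by
    intro x hx
    have h1 : HasDerivAt (fun t => (starRingEnd ℂ) (ym t)) ((starRingEnd ℂ) (ym' x)) x :=
      (hym x hx).star
    have h2 : HasDerivAt (fun t => (starRingEnd ℂ) (ym' t)) ((starRingEnd ℂ) (ym'' x)) x :=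
      (hym' x hx).star
    have := ((hyn' x hx).mul h1).sub ((hyn x hx).mul h2)
    exact this.congr_deriv (by ring)
  -- conjugated ODE for ym
  have hodem' : ∀ x ∈ Icc (0:ℝ) 1,
      -(starRingEnd ℂ) (ym'' x) + (q x : ℂ) * (starRingEnd ℂ) (ym x)
        = μ * (starRingEnd ℂ) (ym x) := by
    intro x hx
    have := congrArg (starRingEnd ℂ) (hodem x hx)
    simpa [map_add, map_neg, map_mul, Complex.conj_ofReal] using this
  -- FTC
  have hint : IntervalIntegrable
      (fun x => yn'' x * (starRingEnd ℂ) (ym x) - yn x * (starRingEnd ℂ) (ym'' x))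
      volume (0:ℝ) 1 := by
    apply ContinuousOn.intervalIntegrable
    rw [huIcc]
    exact (hyn''.mul ccym).sub (cyn.mul ccym'')
  have hftc : ∫ x in (0:ℝ)..1,
      (yn'' x * (starRingEnd ℂ) (ym x) - yn x * (starRingEnd ℂ) (ym'' x)) = W 1 - W 0 :=
    intervalIntegral.integral_eq_sub_of_hasDerivAt (by rw [huIcc]; exact hW) hint
  -- rewrite the integrand
  have hcongr : EqOn (fun x => yn'' x * (starRingEnd ℂ) (ym x) - yn x * (starRingEnd ℂ) (ym'' x))
      (fun x => (μ - lamn) * (yn x * (starRingEnd ℂ) (ym x))) (uIcc (0:ℝ) 1) := by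
    intro x hx
    rw [huIcc] at hx
    have A := hoden x hx
    have B := hodem' x hx
    simp only
    linear_combination (-(starRingEnd ℂ) (ym x)) * A + yn x * B
  have hI : (μ - lamn) * (∫ x in (0:ℝ)..1, yn x * (starRingEnd ℂ) (ym x)) = W 1 - W 0 := by
    rw [← intervalIntegral.integral_const_mul, ← intervalIntegral.integral_congr hcongr]
    exact hftc
  -- boundary term at 0 vanishes
  have hW0 : W 0 = 0 := by
    by_cases hs : Real.sin β = 0
    · have hβ : β = 0 := by
        have h1 : -Real.pi < β := lt_of_lt_of_le (neg_neg_iff_pos.mpr Real.pi_pos) hβ0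
        exact (Real.sin_eq_zero_iff_of_lt_of_lt h1 hβπ).mp hs
      have hc : Real.cos β = 1 := by rw [hβ, Real.cos_zero]
      have h1 : yn 0 = 0 := by
        have := hbc0n
        rw [hc, hs] at this
        simpa using this
      have h2 : ym 0 = 0 := by
        have := hbc0m
        rw [hc, hs] at this
        simpa using this
      simp [hWdef, h1, h2]
    · have hsC : (Real.sin β : ℂ) ≠ 0 := by exact_mod_cast hs
      have hbc0m' : (starRingEnd ℂ) (ym 0) * (Real.cos β : ℂ)
          = (starRingEnd ℂ) (ym' 0) * (Real.sin β : ℂ) := by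
        have h := congrArg (starRingEnd ℂ) hbc0m
        rw [map_mul, map_mul, Complex.conj_ofReal, Complex.conj_ofReal] at h
        exact h
      have : W 0 * (Real.sin β : ℂ) = 0 := by
        simp only [hWdef]
        linear_combination yn 0 * hbc0m' - (starRingEnd ℂ) (ym 0) * hbc0n
      exact (mul_eq_zero.mp this).resolve_right hsC
  -- boundary term at 1
  have hbc1m' : ((a:ℂ) * μ + b) * (starRingEnd ℂ) (ym 1)
      = ((c:ℂ) * μ + d) * (starRingEnd ℂ) (ym' 1) := by
    have h := congrArg (starRingEnd ℂ) hbc1m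
    rw [map_mul, map_mul, map_add, map_add, map_mul, map_mul, Complex.conj_ofReal,
      Complex.conj_ofReal, Complex.conj_ofReal, Complex.conj_ofReal] at h
    exact h
  have hkey : ((c * lamn + d) * (c * μ + d)) * W 1
      = ((a:ℂ) * d - b * c) * (lamn - μ) * (yn 1 * (starRingEnd ℂ) (ym 1)) := by
    simp only [hWdef]
    linear_combination ((c * lamn + d) * yn 1) * hbc1m'
      - ((c * μ + d) * (starRingEnd ℂ) (ym 1)) * hbc1n
  -- conclude
  have hne : μ - lamn ≠ 0 := sub_ne_zero.mpr (fun h => hlam h.symm)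
  rw [eq_div_iff (mul_ne_zero hcn hcm)]
  apply mul_left_cancel₀ hne
  push_cast
  linear_combination ((c * lamn + d) * (c * μ + d)) * hI + hkey
    - ((c * lamn + d) * (c * μ + d)) * hW0
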